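/- (Misspecified regression example: marginal δ-SMI posterior for the intercept.) Let n, m ≥ 1, σ_y, σ_z > 0, δ ≥ 0, covariates X₁,…,X_n ∈ ℝ, responses Y₁,…,Y_n ∈ ℝ and data Z₁,…,Z_m ∈ ℝ. Write x̄ := n^{−1}Σᵢ Xᵢ, x̄² := n^{−1}Σᵢ Xᵢ², x̄y := n^{−1}Σᵢ XᵢYᵢ, ȳ := n^{−1}Σᵢ Yᵢ, z̄ := m^{−1}Σ_j Z_j, and assume x̄² > 0. Set ρ := ((σ_y² + δ²)/σ_z²)·(m/n), μ̃_φ := (ρ z̄ + ȳ − x̄·x̄y/x̄²)/(ρ + 1 − (x̄)²/x̄²) and σ̃_φ² := (ρσ_z²/m)/(ρ + 1 − (x̄)²/x̄²). Then there exists a constant c > 0 (not depending on φ) such that for every φ ∈ ℝ: [∏_{j=1}^{m} gaussianPDF(φ, σ_z², Z_j)] · ∫_ℝ ∏_{i=1}^{n} gaussianPDF(φ + θ̃Xᵢ, σ_y² + δ², Yᵢ) dθ̃ = c · gaussianPDF(μ̃_φ, σ̃_φ², φ). -/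

import Mathlib

/-!
Both likelihoods are exponentials of quadratics. For fixed `φ` the `Y`-likelihood is a Gaussian
function of the slope, so integrating the slope out leaves the exponential of a quadratic in `φ`
(complete the square). Multiplying by the `Z`-likelihood adds the quadratics, hence adds the
precisions; the exponential of a concave quadratic is a constant multiple of the Gaussian
density whose precision is the leading coefficient and whose mean is the vertex.
-/

open MeasureTheory Real

/-- The density at `x` of the normal distribution with mean `m` and variance `v`. -/
noncomputable def gaussianPDF (m v x : ℝ) : ℝ :=
  (Real.sqrt (2 * Real.pi * v))⁻¹ * Real.exp (-((x - m) ^ 2) / (2 * v))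

open Finset

lemma gaussianPDF_eq_gaussianPDFReal (μ : ℝ) {v : ℝ} (hv : 0 ≤ v) (x : ℝ) :
    gaussianPDF μ v x = ProbabilityTheory.gaussianPDFReal μ ⟨v, hv⟩ x := rfl

lemma integral_gaussianPDF (μ : ℝ) {v : ℝ} (hv : 0 < v) : ∫ x, gaussianPDF μ v x = 1 := by
  simp_rw [gaussianPDF_eq_gaussianPDFReal μ hv.le]
  exact ProbabilityTheory.integral_gaussianPDFReal_eq_one μ (ne_of_gt (α := NNReal) hv)

lemma exp_quadratic_eq_mul_gaussianPDF {v : ℝ} (hv : 0 < v) (μ c x : ℝ) :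
    exp (-x ^ 2 / (2 * v) + μ / v * x + c) =
      √(2 * π * v) * exp (μ ^ 2 / (2 * v) + c) * gaussianPDF μ v x := by
  rw [gaussianPDF, mul_mul_mul_comm, mul_inv_cancel₀ (by positivity), one_mul, ← exp_add]
  congr 1
  field_simp
  ring

lemma integral_exp_quadratic {v : ℝ} (hv : 0 < v) (μ c : ℝ) :
    ∫ x, exp (-x ^ 2 / (2 * v) + μ / v * x + c) = √(2 * π * v) * exp (μ ^ 2 / (2 * v) + c) := by
  simp_rw [exp_quadratic_eq_mul_gaussianPDF hv, integral_const_mul, integral_gaussianPDF _ hv,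
    mul_one]

lemma prod_gaussianPDF {ι : Type*} [Fintype ι] (μ x : ι → ℝ) (v : ℝ) :
    ∏ i, gaussianPDF (μ i) v (x i) =
      (√(2 * π * v))⁻¹ ^ Fintype.card ι * exp (-(∑ i, (x i - μ i) ^ 2) / (2 * v)) := by
  simp only [gaussianPDF, prod_mul_distrib, prod_const, ← exp_sum, ← sum_div, sum_neg_distrib,
    card_univ]

lemma sum_sub_sq {ι R : Type*} [CommRing R] (s : Finset ι) (y : ι → R) (φ : R) :
    ∑ i ∈ s, (y i - φ) ^ 2 = ∑ i ∈ s, y i ^ 2 - 2 * φ * ∑ i ∈ s, y i + #s * φ ^ 2 := by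
  have h : ∀ i ∈ s, (y i - φ) ^ 2 = y i ^ 2 - 2 * φ * y i + φ ^ 2 := fun i _ => by ring
  rw [sum_congr rfl h, sum_add_distrib, sum_sub_distrib, ← mul_sum, sum_const, nsmul_eq_mul]

lemma sum_mul_sub {ι R : Type*} [CommRing R] (s : Finset ι) (x y : ι → R) (φ : R) :
    ∑ i ∈ s, x i * (y i - φ) = ∑ i ∈ s, x i * y i - (∑ i ∈ s, x i) * φ := by
  simp only [mul_sub, sum_sub_distrib, sum_mul]

lemma sum_sub_add_mul_sq {ι R : Type*} [CommRing R] (s : Finset ι) (x y : ι → R) (φ θ : R) :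
    ∑ i ∈ s, (y i - (φ + θ * x i)) ^ 2 =
      (∑ i ∈ s, x i ^ 2) * θ ^ 2 - 2 * (∑ i ∈ s, x i * (y i - φ)) * θ
        + ∑ i ∈ s, (y i - φ) ^ 2 := by
  have h : ∀ i ∈ s, (y i - (φ + θ * x i)) ^ 2 =
      x i ^ 2 * θ ^ 2 - 2 * (x i * (y i - φ)) * θ + (y i - φ) ^ 2 := fun i _ => by ring
  rw [sum_congr rfl h, sum_add_distrib, sum_sub_distrib, ← sum_mul, ← sum_mul, ← mul_sum]

lemma integral_prod_gaussianPDF_add_mul {ι : Type*} [Fintype ι] {v : ℝ} (hv : 0 < v)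
    (x y : ι → ℝ) (hx : 0 < ∑ i, x i ^ 2) (φ : ℝ) :
    ∫ θ, ∏ i, gaussianPDF (φ + θ * x i) v (y i) =
      (√(2 * π * v))⁻¹ ^ Fintype.card ι * √(2 * π * (v / ∑ i, x i ^ 2)) *
        exp (((∑ i, x i * (y i - φ)) ^ 2 / ∑ i, x i ^ 2 - ∑ i, (y i - φ) ^ 2) / (2 * v)) := by
  set Sxx := ∑ i, x i ^ 2
  set Sxy := ∑ i, x i * (y i - φ)
  set Syy := ∑ i, (y i - φ) ^ 2
  have hexp : ∀ θ, -(∑ i, (y i - (φ + θ * x i)) ^ 2) / (2 * v) =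
      -θ ^ 2 / (2 * (v / Sxx)) + (Sxy / Sxx) / (v / Sxx) * θ + -Syy / (2 * v) := fun θ => by
    rw [sum_sub_add_mul_sq]
    field_simp
    ring
  have hs : 0 < v / Sxx := by positivity
  simp_rw [prod_gaussianPDF, hexp]
  have hconst : (Sxy / Sxx) ^ 2 / (2 * (v / Sxx)) + -Syy / (2 * v) =
      (Sxy ^ 2 / Sxx - Syy) / (2 * v) := by
    field_simp
    ring
  rw [integral_const_mul, integral_exp_quadratic hs, hconst]
  ring

theorem exists_prod_gaussianPDF_mul_integral_eq_mul_gaussianPDF {ι κ : Type*} [Fintype ι]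
    [Fintype κ] [Nonempty κ] {v w s μ : ℝ} (hv : 0 < v) (hw : 0 < w) (x y : ι → ℝ) (z : κ → ℝ)
    (hx : 0 < ∑ i, x i ^ 2)
    (hs : s⁻¹ = (Fintype.card ι - (∑ i, x i) ^ 2 / ∑ i, x i ^ 2) / v + Fintype.card κ / w)
    (hμ : μ = s * ((∑ i, y i - (∑ i, x i) * (∑ i, x i * y i) / ∑ i, x i ^ 2) / v
      + (∑ j, z j) / w)) :
    ∃ c > 0, ∀ φ, (∏ j, gaussianPDF φ w (z j)) *
      ∫ θ, ∏ i, gaussianPDF (φ + θ * x i) v (y i) = c * gaussianPDF μ s φ := by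
  have hs_pos : 0 < s := by
    have hcauchy : (∑ i, x i) ^ 2 / ∑ i, x i ^ 2 ≤ Fintype.card ι :=
      (div_le_iff₀ hx).2 (by simpa using sq_sum_le_card_mul_sum_sq (s := univ) (f := x))
    have hκ : (0 : ℝ) < Fintype.card κ := by exact_mod_cast Fintype.card_pos
    rw [← inv_pos, hs]
    have := sub_nonneg.2 hcauchy
    positivity
  set C := ((∑ i, x i * y i) ^ 2 / ∑ i, x i ^ 2 - ∑ i, y i ^ 2) / (2 * v)
    - (∑ j, z j ^ 2) / (2 * w) with hC
  have hexp : ∀ φ, -(∑ j, (z j - φ) ^ 2) / (2 * w) +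
      ((∑ i, x i * (y i - φ)) ^ 2 / ∑ i, x i ^ 2 - ∑ i, (y i - φ) ^ 2) / (2 * v) =
      -φ ^ 2 / (2 * s) + μ / s * φ + C := fun φ => by
    have hμs : μ / s = (∑ i, y i - (∑ i, x i) * (∑ i, x i * y i) / ∑ i, x i ^ 2) / v
        + (∑ j, z j) / w := by
      rw [hμ]; field_simp
    rw [show -φ ^ 2 / (2 * s) = -s⁻¹ * φ ^ 2 / 2 by ring, hs, hμs, sum_mul_sub, sum_sub_sq,
      sum_sub_sq, card_univ, card_univ, hC]
    field_simp
    ring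
  refine ⟨(√(2 * π * w))⁻¹ ^ Fintype.card κ * ((√(2 * π * v))⁻¹ ^ Fintype.card ι *
    √(2 * π * (v / ∑ i, x i ^ 2))) * (√(2 * π * s) * exp (μ ^ 2 / (2 * s) + C)),
    by positivity, fun φ => ?_⟩
  rw [prod_gaussianPDF, integral_prod_gaussianPDF_add_mul hv x y hx, mul_mul_mul_comm, ← exp_add,
    hexp, exp_quadratic_eq_mul_gaussianPDF hs_pos]
  ring

theorem regression_marginal_delta_smi_posterior_intercept_general
    (n m : ℕ) (hn : 1 ≤ n) (hm : 1 ≤ m)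
    (σy σz δ : ℝ) (hσy : 0 < σy) (hσz : 0 < σz)
    (X Y : Fin n → ℝ) (Z : Fin m → ℝ)
    (xbar : ℝ) (hxbar : xbar = (n : ℝ)⁻¹ * ∑ i, X i)
    (x2bar : ℝ) (hx2bar : x2bar = (n : ℝ)⁻¹ * ∑ i, (X i) ^ 2)
    (xybar : ℝ) (hxybar : xybar = (n : ℝ)⁻¹ * ∑ i, X i * Y i)
    (ybar : ℝ) (hybar : ybar = (n : ℝ)⁻¹ * ∑ i, Y i)
    (zbar : ℝ) (hzbar : zbar = (m : ℝ)⁻¹ * ∑ j, Z j)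
    (hx2pos : 0 < x2bar)
    (ρ : ℝ) (hρ : ρ = ((σy ^ 2 + δ ^ 2) / σz ^ 2) * ((m : ℝ) / (n : ℝ)))
    (μφ : ℝ) (hμφ : μφ = (ρ * zbar + ybar - xbar * xybar / x2bar)
      / (ρ + 1 - xbar ^ 2 / x2bar))
    (σφsq : ℝ) (hσφsq : σφsq = (ρ * σz ^ 2 / (m : ℝ))
      / (ρ + 1 - xbar ^ 2 / x2bar)) :
    ∃ c : ℝ, 0 < c ∧ ∀ φ : ℝ,
      (∏ j, gaussianPDF φ (σz ^ 2) (Z j)) *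
        (∫ θt : ℝ, ∏ i, gaussianPDF (φ + θt * X i) (σy ^ 2 + δ ^ 2) (Y i))
        = c * gaussianPDF μφ σφsq φ := by
  have hn' : (n : ℝ) ≠ 0 := by positivity
  have hm' : (m : ℝ) ≠ 0 := by positivity
  have : Nonempty (Fin m) := ⟨⟨0, hm⟩⟩
  have hSX : ∑ i, X i = n * xbar := by rw [hxbar, mul_inv_cancel_left₀ hn']
  have hSXX : ∑ i, X i ^ 2 = n * x2bar := by rw [hx2bar, mul_inv_cancel_left₀ hn']
  have hSXY : ∑ i, X i * Y i = n * xybar := by rw [hxybar, mul_inv_cancel_left₀ hn']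
  have hSY : ∑ i, Y i = n * ybar := by rw [hybar, mul_inv_cancel_left₀ hn']
  have hSZ : ∑ j, Z j = m * zbar := by rw [hzbar, mul_inv_cancel_left₀ hm']
  exact exists_prod_gaussianPDF_mul_integral_eq_mul_gaussianPDF (by positivity)
    (by positivity) X Y Z (by rw [hSXX]; positivity)
    (by rw [Fintype.card_fin, Fintype.card_fin, hSX, hSXX, hσφsq, hρ]; field_simp; ring)
    (by rw [hSX, hSXX, hSXY, hSY, hSZ, hμφ, hσφsq, hρ]; field_simp; ring)

/-- Misspecified regression example, marginal δ-SMI posterior for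
the intercept: with `ρ = ((σ_y²+δ²)/σ_z²)·(m/n)`,
`μ̃_φ = (ρz̄ + ȳ − x̄·x̄y/x̄²)/(ρ + 1 − (x̄)²/x̄²)` and
`σ̃_φ² = (ρσ_z²/m)/(ρ + 1 − (x̄)²/x̄²)`, there is a constant `c > 0` not depending
on `φ` with `[∏ⱼ gaussianPDF(φ,σ_z²,Zⱼ)]·∫ ∏ᵢ gaussianPDF(φ+θ̃Xᵢ,σ_y²+δ²,Yᵢ) dθ̃
  = c·gaussianPDF(μ̃_φ,σ̃_φ²,φ)` for every `φ`. -/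
theorem regression_marginal_delta_smi_posterior_intercept
    (n m : ℕ) (hn : 1 ≤ n) (hm : 1 ≤ m)
    (σy σz δ : ℝ) (hσy : 0 < σy) (hσz : 0 < σz) (hδ : 0 ≤ δ)
    (X Y : Fin n → ℝ) (Z : Fin m → ℝ)
    (xbar : ℝ) (hxbar : xbar = (n : ℝ)⁻¹ * ∑ i, X i)
    (x2bar : ℝ) (hx2bar : x2bar = (n : ℝ)⁻¹ * ∑ i, (X i) ^ 2)
    (xybar : ℝ) (hxybar : xybar = (n : ℝ)⁻¹ * ∑ i, X i * Y i)
    (ybar : ℝ) (hybar : ybar = (n : ℝ)⁻¹ * ∑ i, Y i)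
    (zbar : ℝ) (hzbar : zbar = (m : ℝ)⁻¹ * ∑ j, Z j)
    (hx2pos : 0 < x2bar)
    (ρ : ℝ) (hρ : ρ = ((σy ^ 2 + δ ^ 2) / σz ^ 2) * ((m : ℝ) / (n : ℝ)))
    (μφ : ℝ) (hμφ : μφ = (ρ * zbar + ybar - xbar * xybar / x2bar)
      / (ρ + 1 - xbar ^ 2 / x2bar))
    (σφsq : ℝ) (hσφsq : σφsq = (ρ * σz ^ 2 / (m : ℝ))
      / (ρ + 1 - xbar ^ 2 / x2bar)) :
    ∃ c : ℝ, 0 < c ∧ ∀ φ : ℝ,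
      (∏ j, gaussianPDF φ (σz ^ 2) (Z j)) *
        (∫ θt : ℝ, ∏ i, gaussianPDF (φ + θt * X i) (σy ^ 2 + δ ^ 2) (Y i))
        = c * gaussianPDF μφ σφsq φ :=
  regression_marginal_delta_smi_posterior_intercept_general n m hn hm σy σz δ hσy hσz X Y Z xbar
    hxbar x2bar hx2bar xybar hxybar ybar hybar zbar hzbar hx2pos ρ hρ μφ hμφ σφsq hσφsq
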